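/- arXiv:1605.01039 — 2 statements merged into one kernel-verified Lean document; each statement's English description precedes it below -/
import Mathlib

section
/- Let T be a positively edge-weighted tree with square root embedding Ψ, and let L_1, L_2 be disjoint subsets of the vertices of T. If for every v_1, v_2 ∈ L_1 and w_1, w_2 ∈ L_2, the paths P_{v_1,v_2} and P_{w_1,w_2} share no edge, then for all v_1, v_2 ∈ L_1 and w_1, w_2 ∈ L_2 one has (Ψ(v_1) - Ψ(v_2)) · (Ψ(w_1) - Ψ(w_2)) = 0, i.e., the affine spans of Ψ(L_1) and Ψ(L_2) are orthogonal. -/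
open SimpleGraph

/-- The unique path between two vertices of a tree, as a walk. -/
noncomputable def treePath {V : Type*} (G : SimpleGraph V) (hG : G.IsTree) (a b : V) :
    G.Walk a b :=
  (hG.existsUnique_path a b).choose

/-- The square root embedding with base node `v`: the coordinate of `Ψ_v u` at edge `e`
is `√(w e)` if `e` lies on the path from `v` to `u`, and `0` otherwise. -/
noncomputable def sqrtEmbed {V : Type*} [DecidableEq V] (G : SimpleGraph V) (hG : G.IsTree)
    [Fintype G.edgeSet] (w : Sym2 V → ℝ) (v u : V) : EuclideanSpace ℝ G.edgeSet :=
  WithLp.toLp 2 (fun e => if (e : Sym2 V) ∈ (treePath G hG v u).edges then Real.sqrt (w e) else 0)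

/-- The tree metric: sum of the weights of the edges on the unique path. -/
noncomputable def treeDist {V : Type*} (G : SimpleGraph V) (hG : G.IsTree)
    (w : Sym2 V → ℝ) (a b : V) : ℝ :=
  ((treePath G hG a b).edges.map w).sum

/-! The coordinate of `Ψ a - Ψ b` at an edge `e` is nonzero only if `e` lies on exactly one of the
paths from `v` to `a` and from `v` to `b`, and in a tree those edges lie on the path from `a` to `b`.
So difference vectors of edge-disjoint paths have disjoint supports. -/

section TreePath

variable {V : Type*} {G : SimpleGraph V} (hG : G.IsTree)

theorem treePath_eq_of_isPath {a b : V} {p : G.Walk a b} (hp : p.IsPath) :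
    p = treePath G hG a b :=
  (hG.existsUnique_path a b).choose_spec.2 p hp

theorem treePath_isPath (a b : V) : (treePath G hG a b).IsPath :=
  (hG.existsUnique_path a b).choose_spec.1

theorem edges_treePath_subset [DecidableEq V] {a b : V} (q : G.Walk a b) :
    (treePath G hG a b).edges ⊆ q.edges := by
  rw [← treePath_eq_of_isPath hG q.bypass_isPath]
  exact q.edges_bypass_subset_edges

theorem mem_edges_treePath_comm {a b : V} {e : Sym2 V} :
    e ∈ (treePath G hG a b).edges ↔ e ∈ (treePath G hG b a).edges := by
  rw [← treePath_eq_of_isPath hG (treePath_isPath hG a b).reverse, Walk.edges_reverse,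
    List.mem_reverse]

theorem mem_edges_treePath_of_mem_of_not_mem [DecidableEq V] {v a b : V} {e : Sym2 V}
    (ha : e ∈ (treePath G hG v a).edges) (hb : e ∉ (treePath G hG v b).edges) :
    e ∈ (treePath G hG b a).edges := by
  have := edges_treePath_subset hG ((treePath G hG v b).append (treePath G hG b a)) ha
  rw [Walk.edges_append, List.mem_append] at this
  exact this.resolve_left hb

end TreePath

section SqrtEmbed

variable {V : Type*} [DecidableEq V] {G : SimpleGraph V} (hG : G.IsTree) [Fintype G.edgeSet]
  (w : Sym2 V → ℝ)

theorem sqrtEmbed_sub_apply_eq_zero {v a b : V} {e : G.edgeSet}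
    (he : (e : Sym2 V) ∉ (treePath G hG a b).edges) :
    (sqrtEmbed G hG w v a - sqrtEmbed G hG w v b) e = 0 := by
  have hba : (e : Sym2 V) ∉ (treePath G hG b a).edges := (mem_edges_treePath_comm hG).not.mp he
  simp only [sqrtEmbed, PiLp.sub_apply]
  split_ifs with hva hvb hvb
  exacts [sub_self _, absurd (mem_edges_treePath_of_mem_of_not_mem hG hva hvb) hba,
    absurd (mem_edges_treePath_of_mem_of_not_mem hG hvb hva) he, sub_self _]

open RealInnerProductSpace in
theorem inner_sqrtEmbed_sub_eq_zero {v a b c d : V}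
    (h : ∀ e : Sym2 V, e ∈ (treePath G hG a b).edges → e ∉ (treePath G hG c d).edges) :
    ⟪sqrtEmbed G hG w v a - sqrtEmbed G hG w v b,
      sqrtEmbed G hG w v c - sqrtEmbed G hG w v d⟫ = 0 := by
  rw [PiLp.inner_apply]
  refine Finset.sum_eq_zero fun e _ => ?_
  by_cases he : (e : Sym2 V) ∈ (treePath G hG a b).edges
  · simp [sqrtEmbed_sub_apply_eq_zero hG w (h e he)]
  · simp [sqrtEmbed_sub_apply_eq_zero hG w he]

end SqrtEmbed

open RealInnerProductSpace in
theorem sqrtEmbed_spans_orthogonal_general {V : Type*} [DecidableEq V] (G : SimpleGraph V)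
    (hG : G.IsTree) [Fintype G.edgeSet] (w : Sym2 V → ℝ)
    (v : V) (L₁ L₂ : Set V)
    (h : ∀ v₁ ∈ L₁, ∀ v₂ ∈ L₁, ∀ w₁ ∈ L₂, ∀ w₂ ∈ L₂, ∀ e : Sym2 V,
      e ∈ (treePath G hG v₁ v₂).edges → e ∉ (treePath G hG w₁ w₂).edges) :
    ∀ v₁ ∈ L₁, ∀ v₂ ∈ L₁, ∀ w₁ ∈ L₂, ∀ w₂ ∈ L₂,
      ⟪sqrtEmbed G hG w v v₁ - sqrtEmbed G hG w v v₂,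
        sqrtEmbed G hG w v w₁ - sqrtEmbed G hG w v w₂⟫ = 0 :=
  fun v₁ hv₁ v₂ hv₂ w₁ hw₁ w₂ hw₂ =>
    inner_sqrtEmbed_sub_eq_zero hG w (h v₁ hv₁ v₂ hv₂ w₁ hw₁ w₂ hw₂)

open RealInnerProductSpace in
/-- if all paths within `L₁` are edge-disjoint from all paths within `L₂`,
then every difference vector of embedded points of `L₁` is orthogonal to every difference
vector of embedded points of `L₂` (the affine spans are orthogonal). -/
theorem sqrtEmbed_spans_orthogonal {V : Type*} [DecidableEq V] (G : SimpleGraph V)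
    (hG : G.IsTree) [Fintype G.edgeSet] (w : Sym2 V → ℝ) (hw : ∀ e ∈ G.edgeSet, 0 < w e)
    (v : V) (L₁ L₂ : Set V) (hdisj : Disjoint L₁ L₂)
    (h : ∀ v₁ ∈ L₁, ∀ v₂ ∈ L₁, ∀ w₁ ∈ L₂, ∀ w₂ ∈ L₂, ∀ e : Sym2 V,
      e ∈ (treePath G hG v₁ v₂).edges → e ∉ (treePath G hG w₁ w₂).edges) :
    ∀ v₁ ∈ L₁, ∀ v₂ ∈ L₁, ∀ w₁ ∈ L₂, ∀ w₂ ∈ L₂,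
      ⟪sqrtEmbed G hG w v v₁ - sqrtEmbed G hG w v v₂,
        sqrtEmbed G hG w v w₁ - sqrtEmbed G hG w v w₂⟫ = 0 :=
  sqrtEmbed_spans_orthogonal_general G hG w v L₁ L₂ h
end

section
/- Let T be a positively edge-weighted tree, v_1, v_2, v_3, v_4 nodes such that the oriented paths P_{v_1,v_2} and P_{v_3,v_4} share at least one edge with the common subpath traversed in opposite directions. Then (Ψ(v_2) - Ψ(v_1)) · (Ψ(v_4) - Ψ(v_3)) = -Σ_{e ∈ P} w(e) < 0, where P is the set of shared edges. -/
open SimpleGraph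

/-!
Removing an edge `e` splits a tree into two sides, and `e` lies on the path from `a` to `b`
exactly when `a` and `b` are on different sides. So the `e`-coordinate of `Ψ b - Ψ a` is `0`
unless `e` is on that path, and then it is `±√(w e)`, the sign recording whether the base point
`v` lies on the side of the tail of `e` as the path traverses it. Two paths crossing `e` in
opposite directions therefore get opposite signs at `e`, and each shared edge contributes
`-w e` to the inner product.
-/

namespace SimpleGraph

variable {V : Type*} {G : SimpleGraph V}

theorem IsAcyclic.mem_edges_iff_not_reachable_deleteEdges (hG : G.IsAcyclic) {a b : V}
    {p : G.Walk a b} (hp : p.IsPath) (e : Sym2 V) :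
    e ∈ p.edges ↔ ¬ (G.deleteEdges {e}).Reachable a b := by
  classical
  induction e using Sym2.ind with | _ x y => ?_
  rw [reachable_deleteEdges_iff_exists_walk, not_exists_not]
  refine ⟨fun he q => q.edges_bypass_subset_edges ?_, fun h => h p⟩
  have : q.bypass = p := congrArg Subtype.val <|
    (hG.subsingleton_path a b).elim ⟨q.bypass, q.bypass_isPath⟩ ⟨p, hp⟩
  rwa [this]

theorem Walk.IsPath.reachable_deleteEdges_of_mem_darts {a b : V} {p : G.Walk a b}
    (hp : p.IsPath) {d : G.Dart} (hd : d ∈ p.darts) :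
    (G.deleteEdges {d.edge}).Reachable a d.fst ∧ (G.deleteEdges {d.edge}).Reachable d.snd b := by
  induction p with
  | nil => simp at hd
  | @cons a c b hac q ih =>
    rw [Walk.cons_isPath_iff] at hp
    have avoid : s(a, c) ∉ q.edges := fun h => hp.2 (q.fst_mem_support_of_mem_edges h)
    rcases List.mem_cons.mp hd with rfl | hd
    · exact ⟨.rfl, ⟨q.toDeleteEdges _ fun e he h => by
        obtain rfl := Set.mem_singleton_iff.mp h
        exact avoid he⟩⟩
    · obtain ⟨h₁, h₂⟩ := ih hp.1 hd
      have hne : s(a, c) ≠ d.edge := fun h => avoid (h ▸ List.mem_map_of_mem hd)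
      exact ⟨(deleteEdges_adj.mpr ⟨hac, hne⟩).reachable.trans h₁, h₂⟩

theorem IsTree.reachable_deleteEdges_snd_iff (hG : G.IsTree) (d : G.Dart) (u : V) :
    (G.deleteEdges {d.edge}).Reachable u d.snd ↔
      ¬ (G.deleteEdges {d.edge}).Reachable u d.fst := by
  classical
  refine ⟨fun hsnd hfst => isAcyclic_iff_forall_adj_isBridge.mp hG.isAcyclic d.adj
    (hfst.symm.trans hsnd), fun hfst => ?_⟩
  obtain ⟨q⟩ := hG.connected.preconnected u d.fst
  have hmem : d.edge ∈ q.bypass.edges :=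
    (hG.isAcyclic.mem_edges_iff_not_reachable_deleteEdges q.bypass_isPath _).mpr hfst
  obtain ⟨d', hd', hd'e⟩ := List.mem_map.mp hmem
  have hreach := (q.bypass_isPath.reachable_deleteEdges_of_mem_darts hd').1
  rw [hd'e] at hreach
  rcases (dart_edge_eq_iff d' d).mp hd'e with rfl | rfl
  · exact absurd hreach hfst
  · exact hreach

end SimpleGraph

section SqrtEmbed

variable {V : Type*} {G : SimpleGraph V} (hG : G.IsTree)

theorem mem_treePath_edges_iff (a b : V) (e : Sym2 V) :
    e ∈ (treePath G hG a b).edges ↔ ¬ (G.deleteEdges {e}).Reachable a b :=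
  hG.isAcyclic.mem_edges_iff_not_reachable_deleteEdges (treePath_isPath hG a b) e

variable [DecidableEq V] [Fintype G.edgeSet] (w : Sym2 V → ℝ) (v : V)

theorem sqrtEmbed_sub_apply_of_notMem {a b : V} {e : G.edgeSet}
    (he : (e : Sym2 V) ∉ (treePath G hG a b).edges) :
    (sqrtEmbed G hG w v b - sqrtEmbed G hG w v a) e = 0 := by
  have hab := not_not.mp ((mem_treePath_edges_iff hG a b e).not.mp he)
  have hiff : (e : Sym2 V) ∈ (treePath G hG v b).edges ↔
      (e : Sym2 V) ∈ (treePath G hG v a).edges := by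
    simp only [mem_treePath_edges_iff]
    exact not_congr ⟨fun h => h.trans hab.symm, fun h => h.trans hab⟩
  simp only [PiLp.sub_apply, sqrtEmbed, hiff, sub_self]

open Classical in
theorem sqrtEmbed_sub_apply_of_mem_darts {a b : V} {d : G.Dart}
    (hd : d ∈ (treePath G hG a b).darts) {e : G.edgeSet} (he : (e : Sym2 V) = d.edge) :
    (sqrtEmbed G hG w v b - sqrtEmbed G hG w v a) e =
      if (G.deleteEdges {d.edge}).Reachable v d.fst then √(w e) else -√(w e) := by
  obtain ⟨ha, hb⟩ := (treePath_isPath hG a b).reachable_deleteEdges_of_mem_darts hd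
  have hva : (e : Sym2 V) ∈ (treePath G hG v a).edges ↔
      ¬ (G.deleteEdges {d.edge}).Reachable v d.fst := by
    rw [mem_treePath_edges_iff, he]
    exact not_congr ⟨fun h => h.trans ha, fun h => h.trans ha.symm⟩
  have hvb : (e : Sym2 V) ∈ (treePath G hG v b).edges ↔
      (G.deleteEdges {d.edge}).Reachable v d.fst := by
    rw [mem_treePath_edges_iff, he, ← not_iff_not, not_not, ← hG.reachable_deleteEdges_snd_iff]
    exact ⟨fun h => h.trans hb.symm, fun h => h.trans hb⟩
  simp only [PiLp.sub_apply, sqrtEmbed, hva, hvb]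
  split_ifs <;> simp

theorem sqrtEmbed_sub_mul_sqrtEmbed_sub_apply (hw : ∀ e ∈ G.edgeSet, 0 ≤ w e)
    {v₁ v₂ v₃ v₄ : V}
    (hopp : ∀ d₁ ∈ (treePath G hG v₁ v₂).darts, ∀ d₂ ∈ (treePath G hG v₃ v₄).darts,
      d₁.edge = d₂.edge → d₁.toProd = Prod.swap d₂.toProd) (e : G.edgeSet) :
    (sqrtEmbed G hG w v v₂ - sqrtEmbed G hG w v v₁) e *
        (sqrtEmbed G hG w v v₄ - sqrtEmbed G hG w v v₃) e =
      -if (e : Sym2 V) ∈ (treePath G hG v₁ v₂).edges ∧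
          (e : Sym2 V) ∈ (treePath G hG v₃ v₄).edges then w e else 0 := by
  by_cases h₁ : (e : Sym2 V) ∈ (treePath G hG v₁ v₂).edges
  swap
  · rw [sqrtEmbed_sub_apply_of_notMem hG w v h₁, zero_mul, if_neg (fun h => h₁ h.1), neg_zero]
  by_cases h₂ : (e : Sym2 V) ∈ (treePath G hG v₃ v₄).edges
  swap
  · rw [sqrtEmbed_sub_apply_of_notMem hG w v h₂, mul_zero, if_neg (fun h => h₂ h.2), neg_zero]
  obtain ⟨d, hd, hde⟩ := List.mem_map.mp h₁
  obtain ⟨d₂, hd₂, hd₂e⟩ := List.mem_map.mp h₂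
  obtain rfl : d₂ = d.symm :=
    Dart.ext _ _ (by
      change d₂.toProd = d.toProd.swap
      rw [hopp d hd d₂ hd₂ (hde.trans hd₂e.symm), Prod.swap_swap])
  rw [sqrtEmbed_sub_apply_of_mem_darts hG w v hd hde.symm,
    sqrtEmbed_sub_apply_of_mem_darts hG w v hd₂ hd₂e.symm, if_pos (And.intro h₁ h₂),
    Dart.edge_symm]
  have hsides : (G.deleteEdges {d.edge}).Reachable v d.symm.fst ↔
      ¬ (G.deleteEdges {d.edge}).Reachable v d.fst :=
    hG.reachable_deleteEdges_snd_iff d v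
  have hsqrt := Real.mul_self_sqrt (hw e e.2)
  rw [hsides]
  split_ifs <;> simp only [mul_neg, neg_mul, hsqrt]

open RealInnerProductSpace in
theorem inner_sqrtEmbed_sub_sqrtEmbed_sub (hw : ∀ e ∈ G.edgeSet, 0 ≤ w e) {v₁ v₂ v₃ v₄ : V}
    (hopp : ∀ d₁ ∈ (treePath G hG v₁ v₂).darts, ∀ d₂ ∈ (treePath G hG v₃ v₄).darts,
      d₁.edge = d₂.edge → d₁.toProd = Prod.swap d₂.toProd) :
    ⟪sqrtEmbed G hG w v v₂ - sqrtEmbed G hG w v v₁,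
      sqrtEmbed G hG w v v₄ - sqrtEmbed G hG w v v₃⟫ =
      -(∑ e : G.edgeSet, if (e : Sym2 V) ∈ (treePath G hG v₁ v₂).edges ∧
          (e : Sym2 V) ∈ (treePath G hG v₃ v₄).edges then w e else 0) := by
  rw [PiLp.inner_apply, ← Finset.sum_neg_distrib]
  refine Finset.sum_congr rfl fun e _ => ?_
  rw [Real.inner_apply, sqrtEmbed_sub_mul_sqrtEmbed_sub_apply hG w v hw hopp]

end SqrtEmbed

open RealInnerProductSpace in
/-- if the paths `P_{v₁,v₂}` and `P_{v₃,v₄}` share at least one edge and the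
common subpath is traversed in opposite directions (every shared edge is traversed as
reversed darts), then `(Ψ v₂ - Ψ v₁) ⬝ (Ψ v₄ - Ψ v₃)` equals minus the total weight of the
shared edges, and in particular is negative. -/
theorem sqrtEmbed_inner_opposite_dir {V : Type*} [DecidableEq V] (G : SimpleGraph V)
    (hG : G.IsTree) [Fintype G.edgeSet] (w : Sym2 V → ℝ) (hw : ∀ e ∈ G.edgeSet, 0 < w e)
    (v v₁ v₂ v₃ v₄ : V)
    (hshared : ∃ e : Sym2 V, e ∈ (treePath G hG v₁ v₂).edges ∧
      e ∈ (treePath G hG v₃ v₄).edges)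
    (hopp : ∀ d₁ ∈ (treePath G hG v₁ v₂).darts, ∀ d₂ ∈ (treePath G hG v₃ v₄).darts,
      d₁.edge = d₂.edge → d₁.toProd = Prod.swap d₂.toProd) :
    ⟪sqrtEmbed G hG w v v₂ - sqrtEmbed G hG w v v₁,
      sqrtEmbed G hG w v v₄ - sqrtEmbed G hG w v v₃⟫ =
      -(∑ e : G.edgeSet, if (e : Sym2 V) ∈ (treePath G hG v₁ v₂).edges ∧
          (e : Sym2 V) ∈ (treePath G hG v₃ v₄).edges then w e else 0) ∧
    ⟪sqrtEmbed G hG w v v₂ - sqrtEmbed G hG w v v₁,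
      sqrtEmbed G hG w v v₄ - sqrtEmbed G hG w v v₃⟫ < 0 := by
  have hinner := inner_sqrtEmbed_sub_sqrtEmbed_sub hG w v (fun e he => (hw e he).le) hopp
  obtain ⟨e₀, he₁, he₂⟩ := hshared
  have he₀ : e₀ ∈ G.edgeSet := Walk.edges_subset_edgeSet _ he₁
  have hpos : 0 < ∑ e : G.edgeSet, if (e : Sym2 V) ∈ (treePath G hG v₁ v₂).edges ∧
      (e : Sym2 V) ∈ (treePath G hG v₃ v₄).edges then w e else 0 :=
    Finset.sum_pos' (fun e _ => ite_nonneg (hw e e.2).le le_rfl)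
      ⟨⟨e₀, he₀⟩, Finset.mem_univ _, by rw [if_pos ⟨he₁, he₂⟩]; exact hw e₀ he₀⟩
  exact ⟨hinner, hinner ▸ neg_neg_of_pos hpos⟩
end
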